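/- arXiv:2008.04962 — 2 statements merged into one kernel-verified Lean document; each statement's English description precedes it below -/
import Mathlib

section
/- Let E ⊂ ℝ be a finite set. There exist universal constants C and D and a map Ē : C²₊(E) → C²₊(ℝ) such that: (i) Ē(f)|_E = f for all f ∈ C²₊(E); (ii) ‖Ē(f)‖_{C²(ℝ)} ≤ C‖f‖_{C²₊(E)}; (iii) for each t ∈ ℝ there exists S(t) ⊂ E with #S(t) ≤ D such that for all f, g ∈ C²₊(E) with f = g on S(t), the m-th derivatives satisfy (d^m/dt^m)(Ē(f))(t) = (d^m/dt^m)(Ē(g))(t) for m = 0, 1, 2. -/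
/-!
Sort `E` as `τ 0 < ⋯ < τ (n - 1)`. For each `k`, take a nonnegative extension `G k`, of norm at
most twice the trace norm, of `f` restricted to the nodes `τ (k - 1), τ k, τ (k + 1)`, and glue
them: on the gap `[τ j, τ (j + 1)]` the extension is `G j + r * (G (j + 1) - G j)`, where the ramp
`r` rises from `0` to `1` inside the middle third of the gap. This is a convex combination of
nonnegative functions, and near any point it only involves `G j` and `G (j + 1)`, which bounds the
depth. For the `C²` bound: `G j` and `G (j + 1)` agree at both ends of the gap, so by Rolle their
difference is `O(h²)` with derivative `O(h)` on a gap of length `h ≤ 1`, which compensates the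
derivatives of the ramp, of size `h⁻¹` and `h⁻²`.
-/

open Set Real

noncomputable section

/-- `(Σ_{m ≤ 2} |F^{(m)}(t)|²)^{1/2}`. -/
noncomputable def C2sum1 (F : ℝ → ℝ) (t : ℝ) : ℝ :=
  Real.sqrt (∑ m ∈ Finset.range 3, (iteratedDeriv m F t) ^ 2)

/-- `‖F‖_{C²(ℝ)} ≤ M`. -/
def C2NormLE1 (F : ℝ → ℝ) (M : ℝ) : Prop := ∀ t, C2sum1 F t ≤ M

/-- `f ∈ C²₊(E)` for `E ⊂ ℝ`: `f` agrees on `E` with a nonnegative `C²` function of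
finite norm. -/
def MemC2plus1 (E : Set ℝ) (f : ℝ → ℝ) : Prop :=
  ∃ F : ℝ → ℝ, ContDiff ℝ 2 F ∧ (∀ t, 0 ≤ F t) ∧ (∀ t ∈ E, F t = f t) ∧ ∃ M, C2NormLE1 F M

/-- The trace norm `‖f‖_{C²₊(E)}` for `E ⊂ ℝ`. -/
noncomputable def traceNorm1plus (E : Set ℝ) (f : ℝ → ℝ) : ℝ :=
  sInf { M | ∃ F : ℝ → ℝ, ContDiff ℝ 2 F ∧ (∀ t, 0 ≤ F t) ∧ (∀ t ∈ E, F t = f t) ∧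
    C2NormLE1 F M }

open Filter Topology

section C2Norm

variable {F : ℝ → ℝ} {M : ℝ}

theorem abs_iteratedDeriv_le_C2sum1 (F : ℝ → ℝ) (t : ℝ) {m : ℕ} (hm : m ≤ 2) :
    |iteratedDeriv m F t| ≤ C2sum1 F t := by
  rw [← Real.sqrt_sq_eq_abs]
  exact Real.sqrt_le_sqrt <| Finset.single_le_sum (f := fun k => iteratedDeriv k F t ^ 2)
    (fun _ _ => sq_nonneg _) (Finset.mem_range.2 (by omega))

theorem continuous_C2sum1 (hF : ContDiff ℝ 2 F) : Continuous (C2sum1 F) :=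
  Real.continuous_sqrt.comp <| continuous_finsetSum _ fun m hm =>
    (hF.continuous_iteratedDeriv m (by norm_cast; simp at hm; omega)).pow 2

theorem C2NormLE1.nonneg (h : C2NormLE1 F M) : 0 ≤ M :=
  (Real.sqrt_nonneg _).trans (h 0)

theorem C2NormLE1.mono {M' : ℝ} (h : C2NormLE1 F M) (hM : M ≤ M') : C2NormLE1 F M' :=
  fun t => (h t).trans hM

theorem C2NormLE1.abs_iteratedDeriv_le (h : C2NormLE1 F M) {m : ℕ} (hm : m ≤ 2) (t : ℝ) :
    |iteratedDeriv m F t| ≤ M :=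
  (abs_iteratedDeriv_le_C2sum1 F t hm).trans (h t)

theorem C2NormLE1.of_abs_iteratedDeriv_le (h : ∀ t, ∀ m ≤ 2, |iteratedDeriv m F t| ≤ M) :
    C2NormLE1 F (2 * M) := by
  intro t
  have hM : 0 ≤ M := (abs_nonneg _).trans (h t 0 (by norm_num))
  have hsq : ∀ m ≤ 2, iteratedDeriv m F t ^ 2 ≤ M ^ 2 := fun m hm =>
    sq_le_sq' (abs_le.1 (h t m hm)).1 (abs_le.1 (h t m hm)).2
  rw [C2sum1, ← Real.sqrt_sq (by positivity : 0 ≤ 2 * M)]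
  refine Real.sqrt_le_sqrt ?_
  simp only [Finset.sum_range_succ, Finset.sum_range_zero]
  nlinarith [hsq 0 (by norm_num), hsq 1 (by norm_num), hsq 2 le_rfl]

theorem C2NormLE1_zero : C2NormLE1 0 0 := by
  intro t
  simp [C2sum1]

end C2Norm

/-- The transition takes place in the middle third of `[a, b]`, so `ramp a b` is locally
constant near `a` and near `b`. -/
def ramp (a b x : ℝ) : ℝ := smoothTransition (3 / (b - a) * (x - a) - 1)

section Ramp

variable {a b t : ℝ}

theorem contDiff_ramp (a b : ℝ) {N : ℕ∞} : ContDiff ℝ N (ramp a b) :=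
  smoothTransition.contDiff.comp ((contDiff_const.mul (contDiff_id.sub contDiff_const)).sub
    contDiff_const)

theorem ramp_nonneg (a b x : ℝ) : 0 ≤ ramp a b x := smoothTransition.nonneg _

theorem ramp_le_one (a b x : ℝ) : ramp a b x ≤ 1 := smoothTransition.le_one _

theorem ramp_eventually_eq_zero (hab : a < b) (ht : t ≤ a) : ∀ᶠ x in 𝓝 t, ramp a b x = 0 := by
  filter_upwards [Iio_mem_nhds (show t < a + (b - a) / 3 by linarith)] with x hx
  refine smoothTransition.zero_of_nonpos ?_
  have : 3 / (b - a) * (x - a) ≤ 1 := by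
    rw [div_mul_eq_mul_div, div_le_one (by linarith)]; linarith [mem_Iio.1 hx]
  linarith

theorem ramp_eventually_eq_one (hab : a < b) (ht : b ≤ t) : ∀ᶠ x in 𝓝 t, ramp a b x = 1 := by
  filter_upwards [Ioi_mem_nhds (show b - (b - a) / 3 < t by linarith)] with x hx
  refine smoothTransition.one_of_one_le ?_
  have : 2 ≤ 3 / (b - a) * (x - a) := by
    rw [div_mul_eq_mul_div, le_div_iff₀ (by linarith)]; linarith [mem_Ioi.1 hx]
  linarith

theorem iteratedDeriv_ramp (a b : ℝ) (i : ℕ) (x : ℝ) :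
    iteratedDeriv i (ramp a b) x =
      (3 / (b - a)) ^ i * iteratedDeriv i smoothTransition (3 / (b - a) * (x - a) - 1) := by
  set c := 3 / (b - a)
  have hσ : ContDiff ℝ i (fun z : ℝ => smoothTransition (z - 1)) :=
    smoothTransition.contDiff.comp (contDiff_id.sub contDiff_const)
  have hshift : iteratedDeriv i (fun z : ℝ => smoothTransition (z - 1)) =
      fun z => iteratedDeriv i smoothTransition (z - 1) :=
    iteratedDeriv_comp_sub_const i smoothTransition 1
  have hscale : iteratedDeriv i (fun y => smoothTransition (c * y - 1)) =
      fun y => c ^ i * iteratedDeriv i (fun z : ℝ => smoothTransition (z - 1)) (c * y) :=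
    iteratedDeriv_comp_const_mul hσ c
  have htrans : iteratedDeriv i (ramp a b) =
      fun x => iteratedDeriv i (fun y => smoothTransition (c * y - 1)) (x - a) :=
    iteratedDeriv_comp_sub_const i (fun y => smoothTransition (c * y - 1)) a
  rw [htrans, hscale, hshift]

def IsRampBound (B : ℝ) : Prop :=
  ∀ a b, a < b → ∀ x ∈ Icc a b, ∀ i ≤ 2, |iteratedDeriv i (ramp a b) x| * min (b - a) 1 ^ i ≤ B

theorem exists_isRampBound : ∃ B, IsRampBound B := by
  obtain ⟨B₀, hB₀⟩ := (isCompact_Icc : IsCompact (Icc (-1 : ℝ) 2)).exists_bound_of_continuousOn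
    (continuous_C2sum1 (smoothTransition.contDiff (n := 2))).continuousOn
  refine ⟨9 * B₀, fun a b hab x hx i hi => ?_⟩
  have hh : 0 < b - a := by linarith
  have hy : 3 / (b - a) * (x - a) - 1 ∈ Icc (-1 : ℝ) 2 := by
    have : 3 / (b - a) * (x - a) ≤ 3 := by
      rw [div_mul_eq_mul_div, div_le_iff₀ hh]; linarith [hx.2]
    exact ⟨by nlinarith [hx.1, div_pos three_pos hh], by linarith⟩
  have hσ := (abs_iteratedDeriv_le_C2sum1 smoothTransition _ hi).trans
    ((le_abs_self _).trans (hB₀ _ hy))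
  have hρ : 3 / (b - a) * min (b - a) 1 ≤ 3 := by
    rw [div_mul_eq_mul_div, div_le_iff₀ hh]; nlinarith [min_le_left (b - a) 1]
  have hρ₀ : 0 ≤ 3 / (b - a) * min (b - a) 1 := by positivity
  calc |iteratedDeriv i (ramp a b) x| * min (b - a) 1 ^ i
      = (3 / (b - a) * min (b - a) 1) ^ i *
          |iteratedDeriv i smoothTransition (3 / (b - a) * (x - a) - 1)| := by
        rw [iteratedDeriv_ramp, abs_mul, abs_of_nonneg (by positivity), mul_pow]; ring
    _ ≤ 3 ^ 2 * B₀ := by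
        gcongr
        · exact (pow_le_pow_left₀ hρ₀ hρ i).trans (pow_le_pow_right₀ (by norm_num) hi)
    _ = 9 * B₀ := by norm_num

theorem IsRampBound.nonneg {B : ℝ} (hB : IsRampBound B) : 0 ≤ B :=
  (mul_nonneg (abs_nonneg _) (by positivity)).trans (hB 0 1 one_pos 0 (by simp) 0 (by norm_num))

end Ramp

section Blend

variable {a b t : ℝ}

/-- Rolle's theorem gives a zero of `H'` in `(a, b)`; the bound on `H''` then controls `H'`
on `[a, b]`, and that bound in turn controls `H` from its zero at `a`. -/
theorem abs_iteratedDeriv_le_of_eq_zero_of_eq_zero {H : ℝ → ℝ} {L : ℝ} (hH : ContDiff ℝ 2 H)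
    (hL : ∀ k ≤ 2, ∀ x, |iteratedDeriv k H x| ≤ L) (hab : a < b) (ha : H a = 0) (hb : H b = 0)
    (ht : t ∈ Icc a b) {k : ℕ} (hk : k ≤ 2) :
    |iteratedDeriv k H t| ≤ L * min (b - a) 1 ^ (2 - k) := by
  have hL₀ : 0 ≤ L := (abs_nonneg _).trans (hL 0 (by norm_num) a)
  have hdiff : Differentiable ℝ (iteratedDeriv 1 H) :=
    hH.differentiable_iteratedDeriv 1 (by norm_num)
  have hderiv₁ : ∀ x ∈ Icc a b, |iteratedDeriv 1 H x| ≤ L * min (b - a) 1 := by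
    obtain ⟨ξ, hξ, hξ₀⟩ := exists_deriv_eq_zero hab
      (hH.continuous.continuousOn) (ha.trans hb.symm)
    intro x hx
    have hmvt := convex_univ.norm_image_sub_le_of_norm_deriv_le (fun y _ => hdiff y)
      (fun y _ => by rw [← iteratedDeriv_succ]; exact hL 2 le_rfl y) (mem_univ ξ) (mem_univ x)
    rw [iteratedDeriv_one, hξ₀, sub_zero, ← iteratedDeriv_one] at hmvt
    simp only [Real.norm_eq_abs] at hmvt
    rw [mul_min_of_nonneg _ _ hL₀, mul_one]
    refine le_min (hmvt.trans ?_) (hL 1 (by norm_num) x)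
    gcongr
    rw [abs_le]; constructor <;> linarith [hx.1, hx.2, hξ.1, hξ.2]
  have hderiv₀ : |H t| ≤ L * min (b - a) 1 ^ 2 := by
    have hmvt := (convex_Icc a b).norm_image_sub_le_of_norm_deriv_le
      (fun y _ => hH.differentiable (by norm_num) y)
      (fun y hy => by rw [← iteratedDeriv_one]; exact hderiv₁ y hy) (left_mem_Icc.2 hab.le) ht
    rw [ha, sub_zero] at hmvt
    simp only [Real.norm_eq_abs] at hmvt
    have hta : |t - a| ≤ b - a := by rw [abs_le]; constructor <;> linarith [ht.1, ht.2]
    rcases le_total (b - a) 1 with h | h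
    · rw [min_eq_left h] at hmvt ⊢
      calc |H t| ≤ L * (b - a) * |t - a| := hmvt
        _ ≤ L * (b - a) * (b - a) := by gcongr
        _ = L * (b - a) ^ 2 := by ring
    · rw [min_eq_right h, one_pow, mul_one]
      simpa using hL 0 (by norm_num) t
  interval_cases k
  · simpa using hderiv₀
  · simpa using hderiv₁ t ht
  · simpa using hL 2 le_rfl t

theorem abs_iteratedDeriv_sub_le {G₀ G₁ : ℝ → ℝ} {K : ℝ} (hG₀ : ContDiff ℝ 2 G₀)
    (hG₁ : ContDiff ℝ 2 G₁) (hK₀ : C2NormLE1 G₀ K) (hK₁ : C2NormLE1 G₁ K) {k : ℕ} (hk : k ≤ 2)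
    (x : ℝ) : |iteratedDeriv k (fun x => G₀ x - G₁ x) x| ≤ 2 * K := by
  rw [iteratedDeriv_fun_sub ((hG₀.of_le (by exact_mod_cast hk)).contDiffAt)
    ((hG₁.of_le (by exact_mod_cast hk)).contDiffAt)]
  linarith [abs_sub (iteratedDeriv k G₀ x) (iteratedDeriv k G₁ x),
    hK₀.abs_iteratedDeriv_le hk x, hK₁.abs_iteratedDeriv_le hk x]

theorem abs_iteratedDeriv_blend_le {G₀ G₁ u : ℝ → ℝ} {K B : ℝ} (hG₀ : ContDiff ℝ 2 G₀)
    (hG₁ : ContDiff ℝ 2 G₁) (hu : ContDiff ℝ 2 u) (hK₀ : C2NormLE1 G₀ K) (hK₁ : C2NormLE1 G₁ K)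
    (hab : a < b) (ha : G₀ a = G₁ a) (hb : G₀ b = G₁ b) (ht : t ∈ Icc a b)
    (huB : ∀ i ≤ 2, |iteratedDeriv i u t| * min (b - a) 1 ^ i ≤ B) {m : ℕ} (hm : m ≤ 2) :
    |iteratedDeriv m (fun x => G₀ x + u x * (G₁ x - G₀ x)) t| ≤ (1 + 8 * B) * K := by
  set H := fun x => G₁ x - G₀ x
  set ρ := min (b - a) 1
  have hK : 0 ≤ K := hK₀.nonneg
  have hB : 0 ≤ B := (mul_nonneg (abs_nonneg _) (by positivity)).trans (huB 0 (by norm_num))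
  have hρ₀ : 0 ≤ ρ := le_min (by linarith) zero_le_one
  have hH : ContDiff ℝ 2 H := hG₁.sub hG₀
  have hcd : ∀ {F : ℝ → ℝ}, ContDiff ℝ 2 F → ∀ k : ℕ, k ≤ 2 → ContDiffAt ℝ k F t :=
    fun hF k hk => (hF.of_le (by exact_mod_cast hk)).contDiffAt
  have hHρ : ∀ k ≤ 2, |iteratedDeriv k H t| ≤ 2 * K * ρ ^ (2 - k) := fun k hk =>
    abs_iteratedDeriv_le_of_eq_zero_of_eq_zero hH
      (fun k hk x => abs_iteratedDeriv_sub_le hG₁ hG₀ hK₁ hK₀ hk x) hab (by simp [H, ha])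
      (by simp [H, hb]) ht hk
  -- In the Leibniz expansion, `u⁽ⁱ⁾ = O(ρ⁻ⁱ)` meets `H⁽ᵐ⁻ⁱ⁾ = O(ρ ^ (2 - m + i))`.
  have hterm : ∀ i ∈ Finset.range (m + 1),
      |(m.choose i : ℝ) * iteratedDeriv i u t * iteratedDeriv (m - i) H t| ≤
        m.choose i * (2 * B * K) := by
    intro i hi
    have hi : i ≤ m := Nat.lt_succ_iff.1 (Finset.mem_range.1 hi)
    rw [abs_mul, abs_mul, Nat.abs_cast, mul_assoc]
    refine mul_le_mul_of_nonneg_left ?_ (Nat.cast_nonneg _)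
    calc |iteratedDeriv i u t| * |iteratedDeriv (m - i) H t|
        ≤ |iteratedDeriv i u t| * (2 * K * ρ ^ i) := by
          gcongr
          refine (hHρ _ (by omega)).trans (mul_le_mul_of_nonneg_left ?_ (by positivity))
          exact pow_le_pow_of_le_one hρ₀ (min_le_right _ _) (by omega)
      _ = (|iteratedDeriv i u t| * ρ ^ i) * (2 * K) := by ring
      _ ≤ B * (2 * K) := by gcongr; exact huB i (by omega)
      _ = 2 * B * K := by ring
  rw [iteratedDeriv_fun_add (hcd hG₀ m hm) ((hu.mul hH).contDiffAt.of_le (by exact_mod_cast hm)),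
    iteratedDeriv_fun_mul (hcd hu m hm) (hcd hH m hm)]
  calc _ ≤ |iteratedDeriv m G₀ t| + ∑ i ∈ Finset.range (m + 1),
          |(m.choose i : ℝ) * iteratedDeriv i u t * iteratedDeriv (m - i) H t| :=
        (abs_add_le _ _).trans (add_le_add le_rfl (Finset.abs_sum_le_sum_abs _ _))
    _ ≤ K + ∑ i ∈ Finset.range (m + 1), (m.choose i : ℝ) * (2 * B * K) :=
        add_le_add (hK₀.abs_iteratedDeriv_le hm t) (Finset.sum_le_sum hterm)
    _ = K + 2 ^ m * (2 * B * K) := by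
        rw [← Finset.sum_mul, ← Nat.cast_sum, Nat.sum_range_choose, Nat.cast_pow, Nat.cast_ofNat]
    _ ≤ K + 2 ^ 2 * (2 * B * K) := by gcongr; norm_num
    _ = (1 + 8 * B) * K := by ring

end Blend

section TraceNorm

def IsNonnegC2Ext (A : Set ℝ) (f F : ℝ → ℝ) (M : ℝ) : Prop :=
  ContDiff ℝ 2 F ∧ (∀ t, 0 ≤ F t) ∧ (∀ t ∈ A, F t = f t) ∧ C2NormLE1 F M

variable {A E : Set ℝ} {f g F : ℝ → ℝ} {M : ℝ}

theorem IsNonnegC2Ext.mono (h : IsNonnegC2Ext E f F M) (hA : A ⊆ E) {M' : ℝ} (hM : M ≤ M') :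
    IsNonnegC2Ext A f F M' :=
  ⟨h.1, h.2.1, fun t ht => h.2.2.1 t (hA ht), h.2.2.2.mono hM⟩

theorem traceNorm1plus_eq_sInf :
    traceNorm1plus A f = sInf {M | ∃ F, IsNonnegC2Ext A f F M} := rfl

theorem memC2plus1_iff : MemC2plus1 A f ↔ ∃ F M, IsNonnegC2Ext A f F M :=
  ⟨fun ⟨F, h₁, h₂, h₃, M, h₄⟩ => ⟨F, M, h₁, h₂, h₃, h₄⟩,
    fun ⟨F, M, h₁, h₂, h₃, h₄⟩ => ⟨F, h₁, h₂, h₃, M, h₄⟩⟩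

theorem MemC2plus1.mono (hf : MemC2plus1 E f) (hA : A ⊆ E) : MemC2plus1 A f :=
  let ⟨F, M, hF⟩ := memC2plus1_iff.1 hf
  memC2plus1_iff.2 ⟨F, M, hF.mono hA le_rfl⟩

theorem isNonnegC2Ext_congr (h : EqOn f g A) : IsNonnegC2Ext A f = IsNonnegC2Ext A g := by
  ext F M
  have : (∀ t ∈ A, F t = f t) ↔ ∀ t ∈ A, F t = g t := forall₂_congr fun t ht => by rw [h ht]
  simp only [IsNonnegC2Ext, this]

theorem traceNorm1plus_congr (h : EqOn f g A) : traceNorm1plus A f = traceNorm1plus A g := by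
  simp only [traceNorm1plus_eq_sInf, isNonnegC2Ext_congr h]

theorem traceNorm1plus_nonneg (A : Set ℝ) (f : ℝ → ℝ) : 0 ≤ traceNorm1plus A f :=
  Real.sInf_nonneg fun _ ⟨_, hF⟩ => hF.2.2.2.nonneg

theorem bddBelow_isNonnegC2Ext (A : Set ℝ) (f : ℝ → ℝ) :
    BddBelow {M | ∃ F, IsNonnegC2Ext A f F M} :=
  ⟨0, fun _ ⟨_, hF⟩ => hF.2.2.2.nonneg⟩

theorem traceNorm1plus_mono (hf : MemC2plus1 E f) (hA : A ⊆ E) :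
    traceNorm1plus A f ≤ traceNorm1plus E f := by
  obtain ⟨F, M, hF⟩ := memC2plus1_iff.1 hf
  rw [traceNorm1plus_eq_sInf, traceNorm1plus_eq_sInf]
  exact csInf_le_csInf (bddBelow_isNonnegC2Ext A f) ⟨M, F, hF⟩
    fun M ⟨F, hF⟩ => ⟨F, hF.mono hA le_rfl⟩

theorem abs_le_traceNorm1plus (hf : MemC2plus1 A f) {a : ℝ} (ha : a ∈ A) :
    |f a| ≤ traceNorm1plus A f := by
  obtain ⟨F, M, hF⟩ := memC2plus1_iff.1 hf
  rw [traceNorm1plus_eq_sInf]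
  refine le_csInf ⟨M, F, hF⟩ fun M ⟨F, hF⟩ => ?_
  simpa [hF.2.2.1 a ha] using hF.2.2.2.abs_iteratedDeriv_le (m := 0) (by norm_num) a

theorem exists_isNonnegC2Ext_two_mul (hf : MemC2plus1 A f) :
    ∃ F, IsNonnegC2Ext A f F (2 * traceNorm1plus A f) := by
  obtain ⟨F₀, M₀, hF₀⟩ := memC2plus1_iff.1 hf
  rcases (traceNorm1plus_nonneg A f).eq_or_lt with h | h
  · refine ⟨0, contDiff_const, fun _ => le_rfl, fun t ht => ?_, by simpa [← h] using C2NormLE1_zero⟩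
    have := abs_le_traceNorm1plus hf ht
    rw [← h, abs_nonpos_iff] at this
    simp [this]
  · obtain ⟨M, ⟨F, hF⟩, hM⟩ := exists_lt_of_csInf_lt (s := {M | ∃ F, IsNonnegC2Ext A f F M})
      ⟨M₀, F₀, hF₀⟩ (show sInf {M | ∃ F, IsNonnegC2Ext A f F M} < 2 * traceNorm1plus A f by
        rw [← traceNorm1plus_eq_sInf]; linarith)
    exact ⟨F, hF.mono subset_rfl hM.le⟩

open Classical in
/-- The factor `2` spares us from knowing whether the infimum defining the trace norm is
attained. -/
def nearOptimalExt (A : Set ℝ) (f : ℝ → ℝ) : ℝ → ℝ :=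
  if h : ∃ F, IsNonnegC2Ext A f F (2 * traceNorm1plus A f) then h.choose else 0

theorem isNonnegC2Ext_nearOptimalExt (hf : MemC2plus1 A f) :
    IsNonnegC2Ext A f (nearOptimalExt A f) (2 * traceNorm1plus A f) := by
  have h := exists_isNonnegC2Ext_two_mul hf
  rw [nearOptimalExt, dif_pos h]
  exact h.choose_spec

theorem nearOptimalExt_congr (h : EqOn f g A) : nearOptimalExt A f = nearOptimalExt A g := by
  rw [nearOptimalExt, nearOptimalExt, isNonnegC2Ext_congr h, traceNorm1plus_congr h]

end TraceNorm

theorem add_sum_range_mul_sub_of_forall_eq_one {g v : ℕ → ℝ} {N : ℕ} (h : ∀ k < N, v k = 1) :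
    g 0 + ∑ k ∈ Finset.range N, v k * (g (k + 1) - g k) = g N := by
  rw [Finset.sum_congr rfl fun k hk => by rw [h k (Finset.mem_range.1 hk), one_mul],
    Finset.sum_range_sub]
  ring

theorem add_sum_range_mul_sub_eq {g v : ℕ → ℝ} {N j : ℕ} (hj : j < N)
    (h₁ : ∀ k < j, v k = 1) (h₀ : ∀ k, j < k → k < N → v k = 0) :
    g 0 + ∑ k ∈ Finset.range N, v k * (g (k + 1) - g k) = g j + v j * (g (j + 1) - g j) := by
  rw [← Finset.sum_range_add_sum_Ico _ (Nat.succ_le_of_lt hj), Finset.sum_range_succ,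
    Finset.sum_eq_zero (s := Finset.Ico (j + 1) N) fun k hk => by
      rw [h₀ k (Finset.mem_Ico.1 hk).1 (Finset.mem_Ico.1 hk).2, zero_mul],
    ← add_sum_range_mul_sub_of_forall_eq_one (g := g) h₁]
  ring

theorem exists_mem_Icc_of_le_of_le {α : Type*} [LinearOrder α] (τ : ℕ → α) {t : α} {m : ℕ}
    (h₀ : τ 0 ≤ t) (h₁ : t ≤ τ (m + 1)) : ∃ j ≤ m, t ∈ Icc (τ j) (τ (j + 1)) := by
  induction m with
  | zero => exact ⟨0, le_rfl, h₀, h₁⟩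
  | succ m ih =>
    by_cases h : τ (m + 1) ≤ t
    · exact ⟨m + 1, le_rfl, h, h₁⟩
    · obtain ⟨j, hj, hjt⟩ := ih (le_of_not_ge h)
      exact ⟨j, by omega, hjt⟩

section Gluing

variable (τ : ℕ → ℝ) (n : ℕ)

def window (k : ℕ) : Set ℝ := τ '' (Icc (k - 1) (k + 1) ∩ Iio n)

/-- On `[τ j, τ (j + 1)]` the ramps of index `< j` equal `1` and those of index `> j` vanish, so
the sum telescopes to `G j + ramp (τ j) (τ (j + 1)) * (G (j + 1) - G j)`. -/
def glue (G : ℕ → ℝ → ℝ) (x : ℝ) : ℝ :=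
  G 0 x + ∑ k ∈ Finset.range (n - 1), ramp (τ k) (τ (k + 1)) x * (G (k + 1) x - G k x)

theorem ncard_window_le (j : ℕ) : (window τ n j).ncard ≤ 3 :=
  (ncard_image_le ((finite_Icc _ _).inter_of_left _)).trans <|
    (ncard_le_ncard inter_subset_left (finite_Icc _ _)).trans (by simp; omega)

variable {τ n} {G : ℕ → ℝ → ℝ} {f : ℝ → ℝ} {t : ℝ}

theorem apply_mem_window {j k : ℕ} (hk : k < n) (h₁ : j ≤ k + 1) (h₂ : k ≤ j + 1) :
    τ k ∈ window τ n j :=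
  ⟨k, ⟨⟨by omega, by omega⟩, hk⟩, rfl⟩

theorem window_subset (j : ℕ) : window τ n j ⊆ τ '' Iio n :=
  image_mono inter_subset_right

theorem contDiff_glue (hG : ∀ k, ContDiff ℝ 2 (G k)) : ContDiff ℝ 2 (glue τ n G) :=
  (hG 0).add <| ContDiff.sum fun _ _ => (contDiff_ramp _ _).mul ((hG _).sub (hG _))

variable (hτ : StrictMonoOn τ (Iio n))
include hτ

theorem glue_eventuallyEq_left (ht : t ≤ τ 0) (G : ℕ → ℝ → ℝ) : glue τ n G =ᶠ[𝓝 t] G 0 := by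
  have hramp : ∀ᶠ x in 𝓝 t, ∀ k ∈ Finset.range (n - 1), ramp (τ k) (τ (k + 1)) x = 0 := by
    refine (eventually_all_finset _).2 fun k hk => ?_
    have hk := Finset.mem_range.1 hk
    exact ramp_eventually_eq_zero (hτ (by simp; omega) (by simp; omega) (by omega))
      (ht.trans (hτ.monotoneOn (by simp; omega) (by simp; omega) (Nat.zero_le k)))
  filter_upwards [hramp] with x hx
  rw [glue, Finset.sum_eq_zero fun k hk => by rw [hx k hk, zero_mul], add_zero]

theorem glue_eventuallyEq_right (ht : τ (n - 1) ≤ t) (G : ℕ → ℝ → ℝ) :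
    glue τ n G =ᶠ[𝓝 t] G (n - 1) := by
  have hramp : ∀ᶠ x in 𝓝 t, ∀ k ∈ Finset.range (n - 1), ramp (τ k) (τ (k + 1)) x = 1 := by
    refine (eventually_all_finset _).2 fun k hk => ?_
    have hk := Finset.mem_range.1 hk
    exact ramp_eventually_eq_one (hτ (by simp; omega) (by simp; omega) (by omega))
      ((hτ.monotoneOn (by simp; omega) (by simp; omega) (by omega)).trans ht)
  filter_upwards [hramp] with x hx
  exact add_sum_range_mul_sub_of_forall_eq_one (g := (G · x)) fun k hk =>
    hx k (Finset.mem_range.2 hk)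

theorem glue_eventuallyEq_blend {j : ℕ} (hj : j + 1 < n) (ht : t ∈ Icc (τ j) (τ (j + 1)))
    (G : ℕ → ℝ → ℝ) :
    glue τ n G =ᶠ[𝓝 t] fun x => G j x + ramp (τ j) (τ (j + 1)) x * (G (j + 1) x - G j x) := by
  have hramp₁ : ∀ᶠ x in 𝓝 t, ∀ k ∈ Finset.range j, ramp (τ k) (τ (k + 1)) x = 1 := by
    refine (eventually_all_finset _).2 fun k hk => ?_
    have hk := Finset.mem_range.1 hk
    exact ramp_eventually_eq_one (hτ (by simp; omega) (by simp; omega) (by omega))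
      ((hτ.monotoneOn (by simp; omega) (by simp; omega) (by omega)).trans ht.1)
  have hramp₀ : ∀ᶠ x in 𝓝 t, ∀ k ∈ Finset.Ioo j (n - 1), ramp (τ k) (τ (k + 1)) x = 0 := by
    refine (eventually_all_finset _).2 fun k hk => ?_
    have hk := Finset.mem_Ioo.1 hk
    exact ramp_eventually_eq_zero (hτ (by simp; omega) (by simp; omega) (by omega))
      (ht.2.trans (hτ.monotoneOn (by simp; omega) (by simp; omega) (by omega)))
  filter_upwards [hramp₁, hramp₀] with x hx₁ hx₀
  exact add_sum_range_mul_sub_eq (g := (G · x)) (by omega) (fun k hk => hx₁ k (Finset.mem_range.2 hk))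
    fun k hk₁ hk₂ => hx₀ k (Finset.mem_Ioo.2 ⟨hk₁, hk₂⟩)

theorem glue_eventuallyEq_cases (t : ℝ) :
    (∃ j, ∀ G, glue τ n G =ᶠ[𝓝 t] G j) ∨
      ∃ j, j + 1 < n ∧ t ∈ Icc (τ j) (τ (j + 1)) ∧ ∀ G,
        glue τ n G =ᶠ[𝓝 t] fun x => G j x + ramp (τ j) (τ (j + 1)) x * (G (j + 1) x - G j x) := by
  by_cases h₀ : t ≤ τ 0
  · exact Or.inl ⟨0, glue_eventuallyEq_left hτ h₀⟩
  by_cases h₁ : τ (n - 1) ≤ t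
  · exact Or.inl ⟨n - 1, glue_eventuallyEq_right hτ h₁⟩
  push Not at h₀ h₁
  obtain ⟨m, hm⟩ : ∃ m, n - 1 = m + 1 :=
    Nat.exists_eq_succ_of_ne_zero fun h => by rw [h] at h₁; linarith
  obtain ⟨j, hj, hjt⟩ := exists_mem_Icc_of_le_of_le τ h₀.le (hm ▸ h₁.le)
  exact Or.inr ⟨j, by omega, hjt, glue_eventuallyEq_blend hτ (by omega) hjt⟩

theorem exists_glue_eventuallyEq (t : ℝ) : ∃ j, ∀ G G' : ℕ → ℝ → ℝ,
    G j = G' j → G (j + 1) = G' (j + 1) → glue τ n G =ᶠ[𝓝 t] glue τ n G' := by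
  rcases glue_eventuallyEq_cases hτ t with ⟨j, hj⟩ | ⟨j, -, -, hj⟩
  · exact ⟨j, fun G G' h _ => (hj G).trans (h ▸ (hj G').symm)⟩
  · exact ⟨j, fun G G' h h' => (hj G).trans (by rw [h, h']; exact (hj G').symm)⟩

theorem glue_nonneg (hG : ∀ k x, 0 ≤ G k x) (t : ℝ) : 0 ≤ glue τ n G t := by
  rcases glue_eventuallyEq_cases hτ t with ⟨j, hj⟩ | ⟨j, -, -, hj⟩
  · rw [(hj G).eq_of_nhds]; exact hG j t
  · rw [(hj G).eq_of_nhds]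
    have h₀ := ramp_nonneg (τ j) (τ (j + 1)) t
    have h₁ := ramp_le_one (τ j) (τ (j + 1)) t
    nlinarith [hG j t, hG (j + 1) t]

theorem glue_apply_of_eqOn (hG : ∀ k, EqOn (G k) f (window τ n k)) {k : ℕ} (hk : k < n) :
    glue τ n G (τ k) = f (τ k) := by
  by_cases hk' : k + 1 < n
  · rw [(glue_eventuallyEq_blend hτ hk' ⟨le_rfl, (hτ (by simpa) (by simpa) (by omega)).le⟩
      G).eq_of_nhds, hG k (apply_mem_window hk (by omega) (by omega)),
      hG (k + 1) (apply_mem_window hk (by omega) (by omega))]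
    ring
  · obtain rfl : k = n - 1 := by omega
    rw [(glue_eventuallyEq_right hτ le_rfl G).eq_of_nhds,
      hG (n - 1) (apply_mem_window hk (by omega) (by omega))]

theorem C2NormLE1_glue {B K : ℝ} (hB : IsRampBound B)
    (hG : ∀ k, IsNonnegC2Ext (window τ n k) f (G k) K) :
    C2NormLE1 (glue τ n G) (2 * ((1 + 8 * B) * K)) := by
  refine C2NormLE1.of_abs_iteratedDeriv_le fun t m hm => ?_
  rcases glue_eventuallyEq_cases hτ t with ⟨j, hj⟩ | ⟨j, hj, ht, hjG⟩
  · rw [(hj G).iteratedDeriv_eq m]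
    exact ((hG j).2.2.2.abs_iteratedDeriv_le hm t).trans <|
      le_mul_of_one_le_left (hG j).2.2.2.nonneg (by linarith [hB.nonneg])
  · have hab : τ j < τ (j + 1) := hτ (by simp; omega) (by simpa) (by omega)
    have hagree : ∀ i, j ≤ i → i ≤ j + 1 → G j (τ i) = G (j + 1) (τ i) := fun i hi₁ hi₂ => by
      rw [(hG j).2.2.1 _ (apply_mem_window (by omega) (by omega) hi₂),
        (hG (j + 1)).2.2.1 _ (apply_mem_window (by omega) (by omega) (by omega))]
    rw [(hjG G).iteratedDeriv_eq m]
    exact abs_iteratedDeriv_blend_le (hG j).1 (hG (j + 1)).1 (contDiff_ramp _ _) (hG j).2.2.2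
      (hG (j + 1)).2.2.2 hab (hagree j le_rfl (by omega)) (hagree (j + 1) (by omega) le_rfl) ht
      (hB _ _ hab t ht) hm

theorem isNonnegC2Ext_glue {B K : ℝ} (hB : IsRampBound B)
    (hG : ∀ k, IsNonnegC2Ext (window τ n k) f (G k) K) :
    IsNonnegC2Ext (τ '' Iio n) f (glue τ n G) (2 * ((1 + 8 * B) * K)) :=
  ⟨contDiff_glue fun k => (hG k).1, glue_nonneg hτ fun k => (hG k).2.1,
    by rintro _ ⟨k, hk, rfl⟩; exact glue_apply_of_eqOn hτ (fun k x hx => (hG k).2.2.1 x hx) hk,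
    C2NormLE1_glue hτ hB hG⟩

end Gluing

theorem Set.Finite.exists_strictMonoOn_image_Iio_eq {α : Type*} [LinearOrder α] [Nonempty α]
    {E : Set α} (hE : E.Finite) :
    ∃ (n : ℕ) (τ : ℕ → α), StrictMonoOn τ (Iio n) ∧ τ '' Iio n = E := by
  classical
  set s := hE.toFinset
  set e := s.orderEmbOfFin rfl
  refine ⟨s.card, fun k => if h : k < s.card then e ⟨k, h⟩ else Classical.arbitrary α,
    fun i hi j hj hij => ?_, ?_⟩
  · simp only [dif_pos (mem_Iio.1 hi), dif_pos (mem_Iio.1 hj)]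
    exact e.strictMono (Fin.mk_lt_mk.2 hij)
  · ext x
    constructor
    · rintro ⟨k, hk, rfl⟩
      simp only [dif_pos (mem_Iio.1 hk)]
      exact hE.mem_toFinset.1 (s.orderEmbOfFin_mem rfl _)
    · intro hx
      obtain ⟨i, rfl⟩ : x ∈ Set.range e := by
        rw [Finset.range_orderEmbOfFin]; exact hE.mem_toFinset.2 hx
      exact ⟨i, i.2, by simp [i.2]⟩

/-- One-dimensional nonnegative `C²` extension operator of bounded depth. -/
theorem oneDim_nonneg_extension_bounded_depth :
    ∃ (C : ℝ) (D : ℕ),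
      ∀ E : Set ℝ, E.Finite →
        ∃ Ext : (ℝ → ℝ) → (ℝ → ℝ),
          (∀ f : ℝ → ℝ, MemC2plus1 E f →
            ContDiff ℝ 2 (Ext f) ∧ (∀ t, 0 ≤ Ext f t) ∧ (∀ t ∈ E, Ext f t = f t) ∧
            C2NormLE1 (Ext f) (C * traceNorm1plus E f)) ∧
          (∀ t : ℝ, ∃ S : Set ℝ, S ⊆ E ∧ S.ncard ≤ D ∧
            ∀ f g : ℝ → ℝ, MemC2plus1 E f → MemC2plus1 E g → (∀ s ∈ S, f s = g s) →
              ∀ m ≤ 2, iteratedDeriv m (Ext f) t = iteratedDeriv m (Ext g) t) := by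
  obtain ⟨B, hB⟩ := exists_isRampBound
  refine ⟨4 * (1 + 8 * B), 6, fun E hE => ?_⟩
  obtain ⟨n, τ, hτ, rfl⟩ := hE.exists_strictMonoOn_image_Iio_eq
  refine ⟨fun f => glue τ n fun k => nearOptimalExt (window τ n k) f, fun f hf => ?_, fun t => ?_⟩
  · have hG : ∀ k, IsNonnegC2Ext (window τ n k) f (nearOptimalExt (window τ n k) f)
        (2 * traceNorm1plus (τ '' Iio n) f) := fun k =>
      (isNonnegC2Ext_nearOptimalExt (hf.mono (window_subset k))).mono subset_rfl
        (by linarith [traceNorm1plus_mono hf (window_subset k)])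
    obtain ⟨hcd, hnonneg, heq, hnorm⟩ := isNonnegC2Ext_glue hτ hB hG
    exact ⟨hcd, hnonneg, heq, hnorm.mono (by ring_nf; rfl)⟩
  · obtain ⟨j, hj⟩ := exists_glue_eventuallyEq hτ t
    refine ⟨window τ n j ∪ window τ n (j + 1), union_subset (window_subset j) (window_subset _),
      (ncard_union_le _ _).trans (by linarith [ncard_window_le τ n j, ncard_window_le τ n (j + 1)]), fun f g _ _ hfg m _ => ?_⟩
    exact (hj _ _ (nearOptimalExt_congr fun x hx => hfg x (Or.inl hx))
      (nearOptimalExt_congr fun x hx => hfg x (Or.inr hx))).iteratedDeriv_eq m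

end
end

section
/- For every positive integer D there is a constant C_D, depending only on D, such that the following holds. Let ℱ be a finite collection of compact, convex, symmetric subsets of ℝ^D, each having 0 as an interior point. Then there exist K₁, …, K_{D(D+1)} ∈ ℱ such that K₁ ∩ ⋯ ∩ K_{D(D+1)} ⊂ C_D · (∩_{K∈ℱ} K). -/
/-!
Let `L` be the intersection of the whole family; it is a compact, convex, symmetric neighbourhood
of `0`. A family `b` of `D` points of `L` maximising `|det|` is a basis in which every point of `L`
has all coordinates in `[-1, 1]`: replacing `b j` by `x ∈ L` multiplies the determinant by the
`j`-th coordinate of `x`. For each `j`, the convex set `{x | 1 < b.repr x j}` misses `L`, so by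
Helly's theorem it already misses the intersection of some `D` members of the family, which by
symmetry bound `|b.repr x j|` by `1`. The `D²` sets obtained this way have intersection inside
`{∑ c j • b j | |c j| ≤ 1} ⊆ D • L`.
-/

open Set Pointwise Finset Topology Module Filter

theorem Convex.sum_mem_card_smul {ι E : Type*} [AddCommGroup E] [Module ℝ E] {s : Set E}
    (hs : Convex ℝ s) {t : Finset ι} (ht : t.Nonempty) {z : ι → E} (hz : ∀ i ∈ t, z i ∈ s) :
    ∑ i ∈ t, z i ∈ (#t : ℝ) • s := by
  have hcard : (#t : ℝ) ≠ 0 := by exact_mod_cast ht.card_pos.ne'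
  refine ⟨∑ i ∈ t, (#t : ℝ)⁻¹ • z i, hs.sum_mem (fun _ _ => by positivity) ?_ hz, ?_⟩
  · simp [hcard]
  · simp [Finset.smul_sum, smul_smul, hcard]

theorem Balanced.mem_card_smul_of_abs_repr_le_one {ι E : Type*} [Fintype ι] [Nonempty ι]
    [AddCommGroup E] [Module ℝ E] {s : Set E} (hconv : Convex ℝ s) (hbal : Balanced ℝ s)
    (b : Basis ι ℝ E) (hb : ∀ i, b i ∈ s) {x : E} (hx : ∀ i, |b.repr x i| ≤ 1) :
    x ∈ (Fintype.card ι : ℝ) • s := by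
  rw [← b.sum_repr x, ← Finset.card_univ]
  exact hconv.sum_mem_card_smul univ_nonempty fun i _ => hbal.smul_mem (by simpa using hx i) (hb i)

theorem Convex.exists_subfamily_card_le_finrank_disjoint {𝕜 E : Type*} [Field 𝕜] [LinearOrder 𝕜]
    [IsStrictOrderedRing 𝕜] [AddCommGroup E] [Module 𝕜 E] [FiniteDimensional 𝕜 E]
    {𝓕 : Finset (Set E)} (h𝓕 : ∀ K ∈ 𝓕, Convex 𝕜 K) (hne : (⋂ K ∈ 𝓕, K).Nonempty)
    {H : Set E} (hH : Convex 𝕜 H) (hdisj : Disjoint (⋂ K ∈ 𝓕, K) H) :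
    ∃ I ⊆ 𝓕, #I ≤ finrank 𝕜 E ∧ Disjoint (⋂ K ∈ I, K) H := by
  classical
  by_contra! hmeet
  suffices (⋂ K ∈ insert H 𝓕, id K).Nonempty by
    rw [set_biInter_insert] at this
    exact (hdisj.symm.inter_eq ▸ this).ne_empty rfl
  refine Convex.helly_theorem' (𝕜 := 𝕜) (forall_mem_insert _ _ _ |>.2 ⟨hH, h𝓕⟩)
    fun I hI hIcard => ?_
  by_cases hHI : H ∈ I
  · rw [← insert_erase hHI, set_biInter_insert, inter_comm]
    refine not_disjoint_iff_nonempty_inter.1 (hmeet _ ?_ ?_)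
    · simpa [Finset.subset_insert_iff] using hI
    · rw [card_erase_of_mem hHI]; omega
  · exact hne.mono (biInter_mono (by simpa [Finset.subset_insert_iff_of_notMem hHI] using hI)
      fun _ _ => subset_rfl)

theorem Set.neg_biInter_eq_self {E : Type*} [InvolutiveNeg E] {𝓕 : Finset (Set E)}
    (h𝓕 : ∀ K ∈ 𝓕, K = -K) : -(⋂ K ∈ 𝓕, K) = ⋂ K ∈ 𝓕, K := by
  simp only [iInter_neg]
  exact iInter₂_congr fun K hK => (h𝓕 K hK).symm

theorem Convex.exists_subfamily_card_le_finrank_abs_le {E : Type*} [AddCommGroup E] [Module ℝ E]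
    [FiniteDimensional ℝ E] {𝓕 : Finset (Set E)} (h𝓕 : ∀ K ∈ 𝓕, Convex ℝ K ∧ K = -K)
    (hne : (⋂ K ∈ 𝓕, K).Nonempty) (f : E →ₗ[ℝ] ℝ) {c : ℝ} (hf : ∀ x ∈ ⋂ K ∈ 𝓕, K, |f x| ≤ c) :
    ∃ I ⊆ 𝓕, #I ≤ finrank ℝ E ∧ ∀ x ∈ ⋂ K ∈ I, K, |f x| ≤ c := by
  obtain ⟨I, hI𝓕, hIcard, hI⟩ := exists_subfamily_card_le_finrank_disjoint
    (fun K hK => (h𝓕 K hK).1) hne (convex_halfSpace_gt f.isLinear c)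
    (disjoint_left.2 fun x hx hxc => not_lt.2 (abs_le.1 (hf x hx)).2 hxc)
  have hle : ∀ x ∈ ⋂ K ∈ I, K, f x ≤ c := fun x hx => not_lt.1 (disjoint_left.1 hI hx)
  refine ⟨I, hI𝓕, hIcard, fun x hx => abs_le.2 ⟨?_, hle x hx⟩⟩
  have hnegx : -x ∈ ⋂ K ∈ I, K :=
    neg_biInter_eq_self (fun K hK => (h𝓕 K (hI𝓕 hK)).2) ▸ neg_mem_neg.2 hx
  linarith [hle (-x) hnegx, f.map_neg x]

theorem Matrix.det_updateCol_one {ι R : Type*} [Fintype ι] [DecidableEq ι] [CommRing R]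
    (v : ι → R) (j : ι) : (Matrix.updateCol (1 : Matrix ι ι R) j v).det = v j := by
  simpa [Matrix.one_apply] using Matrix.det_updateCol_sum (1 : Matrix ι ι R) j v

theorem Module.Basis.det_update {ι R M : Type*} [Fintype ι] [DecidableEq ι] [CommRing R]
    [AddCommGroup M] [Module R M] (e b : Basis ι R M) (j : ι) (x : M) :
    e.det (Function.update b j x) = e.det b * b.repr x j := by
  conv_lhs => rw [AlternatingMap.eq_smul_basis_det b e.det]
  rw [AlternatingMap.smul_apply, smul_eq_mul, b.det_apply, b.toMatrix_update, b.toMatrix_self,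
    Matrix.det_updateCol_one]

theorem Module.Basis.abs_repr_le_one_of_isMaxOn {ι E : Type*} [Fintype ι] [DecidableEq ι]
    [AddCommGroup E] [Module ℝ E] (e b : Basis ι ℝ E) {L : Set E} (hb : ∀ i, b i ∈ L)
    (hmax : IsMaxOn (fun v => |e.det v|) (univ.pi fun _ => L) b) {x : E} (hx : x ∈ L) (j : ι) :
    |b.repr x j| ≤ 1 := by
  have hupdate : Function.update b j x ∈ univ.pi fun _ => L := fun i _ => by
    rcases eq_or_ne i j with rfl | hij
    · simpa using hx
    · simpa [hij] using hb i
  have hle := isMaxOn_iff.1 hmax _ hupdate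
  rw [e.det_update, abs_mul] at hle
  exact (mul_le_iff_le_one_right (abs_pos.2 (e.isUnit_det b).ne_zero)).1 hle

section Normed

variable {ι E : Type*} [Fintype ι] [DecidableEq ι] [NormedAddCommGroup E] [NormedSpace ℝ E]
  (e : Basis ι ℝ E)

theorem Module.Basis.continuous_det [FiniteDimensional ℝ E] :
    Continuous fun v : ι → E => e.det v := by
  have hentry : ∀ i j, Continuous fun v : ι → E => e.toMatrix v i j := fun i j => by
    simp only [Basis.toMatrix_apply, ← Basis.coord_apply]
    exact (e.coord i).continuous_of_finiteDimensional.comp (continuous_apply j)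
  simpa only [Basis.det_apply] using (continuous_matrix hentry).matrix_det

theorem Module.Basis.exists_det_ne_zero_of_mem_nhds {L : Set E} (hL : L ∈ 𝓝 0) :
    ∃ v : ι → E, (∀ i, v i ∈ L) ∧ e.det v ≠ 0 := by
  have hsmall : ∀ᶠ t : ℝ in 𝓝[>] 0, ∀ i, t • e i ∈ L := by
    refine eventually_all.2 fun i => nhdsWithin_le_nhds ?_
    exact (continuous_id.smul continuous_const).tendsto' 0 0 (zero_smul ℝ (e i)) hL
  obtain ⟨t, ht, htpos⟩ := (hsmall.and self_mem_nhdsWithin).exists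
  refine ⟨fun i => t • e i, ht, ?_⟩
  rw [e.det.map_smul_univ, e.det_self, smul_eq_mul, mul_one]
  exact prod_ne_zero_iff.2 fun _ _ => htpos.ne'

end Normed

theorem exists_basis_forall_abs_repr_le_one {E : Type*} [NormedAddCommGroup E] [NormedSpace ℝ E]
    [FiniteDimensional ℝ E] {L : Set E} (hLc : IsCompact L) (hL0 : L ∈ 𝓝 0) :
    ∃ b : Basis (Fin (finrank ℝ E)) ℝ E, (∀ i, b i ∈ L) ∧ ∀ x ∈ L, ∀ j, |b.repr x j| ≤ 1 := by
  let e := Module.finBasis ℝ E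
  obtain ⟨v, hvL, hv⟩ := e.exists_det_ne_zero_of_mem_nhds hL0
  obtain ⟨u, huL, hmax⟩ := (isCompact_univ_pi fun _ => hLc).exists_isMaxOn
    ⟨v, fun i _ => hvL i⟩ e.continuous_det.abs.continuousOn
  have hu : e.det u ≠ 0 := fun h =>
    hv (abs_nonpos_iff.1 (by simpa [h] using isMaxOn_iff.1 hmax v fun i _ => hvL i))
  obtain ⟨hli, hsp⟩ := e.is_basis_iff_det.2 (isUnit_iff_ne_zero.2 hu)
  set b := Basis.mk hli hsp.ge
  have hbL : ∀ i, b i ∈ L := fun i => by simpa [b] using huL i trivial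
  refine ⟨b, hbL, fun x hx j => e.abs_repr_le_one_of_isMaxOn b hbL ?_ hx j⟩
  rwa [Basis.coe_mk]

theorem Finset.exists_fin_subset_range {α : Type*} {s J : Finset α} {n : ℕ} (hJs : J ⊆ s)
    (hJn : #J ≤ n) {a : α} (ha : a ∈ s) :
    ∃ g : Fin n → α, (∀ i, g i ∈ s) ∧ (J : Set α) ⊆ Set.range g := by
  classical
  refine ⟨fun i => if h : (i : ℕ) < #J then J.equivFin.symm ⟨i, h⟩ else a, fun i => ?_,
    fun X hX => ⟨Fin.castLE hJn (J.equivFin ⟨X, hX⟩), by simp⟩⟩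
  dsimp only
  split_ifs
  · exact hJs (Subtype.prop _)
  · exact ha

/-- A variant of Helly's theorem: given a finite (nonempty) family of
compact, convex, symmetric subsets of `ℝ^D` with `0` in the interior of each, some
`D(D+1)` of them have intersection contained in `C_D` times the intersection of all. -/
theorem helly_variant :
    ∀ D : ℕ, 0 < D →
      ∃ CD : ℝ, 0 < CD ∧
        ∀ 𝓕 : Finset (Set (EuclideanSpace ℝ (Fin D))), 𝓕.Nonempty →
          (∀ K ∈ 𝓕, IsCompact K ∧ Convex ℝ K ∧ K = -K ∧
            (0 : EuclideanSpace ℝ (Fin D)) ∈ interior K) →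
          ∃ Ks : Fin (D * (D + 1)) → Set (EuclideanSpace ℝ (Fin D)),
            (∀ i, Ks i ∈ 𝓕) ∧
            (⋂ i, Ks i) ⊆ CD • ⋂ K ∈ 𝓕, (K : Set (EuclideanSpace ℝ (Fin D))) := by
  intro D hD
  refine ⟨D, by positivity, fun 𝓕 ⟨K₀, hK₀⟩ h𝓕 => ?_⟩
  set L := ⋂ K ∈ 𝓕, K
  have hLconv : Convex ℝ L := convex_iInter₂ fun K hK => (h𝓕 K hK).2.1
  have hLsymm : -L = L := neg_biInter_eq_self fun K hK => (h𝓕 K hK).2.2.1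
  have hLbal : Balanced ℝ L :=
    (balanced_iff_neg_mem hLconv).2 fun x hx => hLsymm ▸ neg_mem_neg.2 hx
  have hL0 : L ∈ 𝓝 0 :=
    (biInter_finset_mem 𝓕).2 fun K hK => mem_interior_iff_mem_nhds.1 (h𝓕 K hK).2.2.2
  have hLc : IsCompact L := (h𝓕 K₀ hK₀).1.of_isClosed_subset
    (isClosed_biInter fun K hK => (h𝓕 K hK).1.isClosed) (biInter_subset_of_mem hK₀)
  obtain ⟨b, hbL, hb⟩ := exists_basis_forall_abs_repr_le_one hLc hL0
  choose I hI𝓕 hIcard hI using fun j => Convex.exists_subfamily_card_le_finrank_abs_le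
    (fun K hK => ⟨(h𝓕 K hK).2.1, (h𝓕 K hK).2.2.1⟩) ⟨0, mem_of_mem_nhds hL0⟩ (b.coord j)
    fun x hx => hb x hx j
  have hcard : #(univ.biUnion I) ≤ D * (D + 1) := calc
    #(univ.biUnion I) ≤ ∑ j, #(I j) := card_biUnion_le
    _ ≤ ∑ _j, finrank ℝ (EuclideanSpace ℝ (Fin D)) := sum_le_sum fun j _ => hIcard j
    _ = D * D := by simp
    _ ≤ D * (D + 1) := Nat.mul_le_mul_left D D.le_succ
  obtain ⟨Ks, hKs𝓕, hKs⟩ := exists_fin_subset_range (biUnion_subset.2 fun j _ => hI𝓕 j) hcard hK₀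
  refine ⟨Ks, hKs𝓕, fun x hx => ?_⟩
  have hxI : ∀ j, x ∈ ⋂ K ∈ I j, K := fun j => mem_iInter₂.2 fun K hK => by
    obtain ⟨i, rfl⟩ := hKs (mem_biUnion.2 ⟨j, mem_univ j, hK⟩)
    exact mem_iInter.1 hx i
  have : Nonempty (Fin (finrank ℝ (EuclideanSpace ℝ (Fin D)))) := ⟨⟨0, by simpa⟩⟩
  simpa using hLbal.mem_card_smul_of_abs_repr_le_one hLconv b hbL fun j => hI j x (hxI j)
end
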